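/- arXiv:2604.08759 — 6 statements merged into one kernel-verified Lean document; each statement's English description precedes it below -/
import Mathlib

section
/- A non-negative vector a of length N can be written as a non-negative weighted sum of T-hot vectors (binary vectors of length N with exactly T ones) if and only if T times the maximum entry of a is at most the sum of all entries of a. -/
/-- The maximum entry of a vector indexed by a nonempty `Fin N`. -/
noncomputable def vecMax {N : ℕ} (hN : 0 < N) (a : Fin N → ℝ) : ℝ :=
  Finset.univ.sup' (Finset.univ_nonempty_iff.mpr (Fin.pos_iff_nonempty.mp hN)) a

/-- The collection of `T`-hot index sets (supports of `T`-hot 0-1 vectors). -/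
def tHotSets (N T : ℕ) : Finset (Finset (Fin N)) :=
  Finset.univ.filter (fun s => s.card = T)

namespace THotAux

open Finset MeasureTheory

/-- prefix sums -/
noncomputable def pre (N : ℕ) (a : Fin N → ℝ) (n : ℕ) : ℝ :=
  ∑ j ∈ Finset.range n, if h : j < N then a ⟨j, h⟩ else 0

lemma pre_zero (N : ℕ) (a : Fin N → ℝ) : pre N a 0 = 0 := by simp [pre]

lemma pre_succ (N : ℕ) (a : Fin N → ℝ) (n : ℕ) :
    pre N a (n + 1) = pre N a n + if h : n < N then a ⟨n, h⟩ else 0 :=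
  Finset.sum_range_succ _ _

lemma pre_succ_fin (N : ℕ) (a : Fin N → ℝ) (i : Fin N) :
    pre N a ((i : ℕ) + 1) = pre N a i + a i := by
  rw [pre_succ, dif_pos i.isLt]

lemma pre_mono (N : ℕ) (a : Fin N → ℝ) (ha : ∀ i, 0 ≤ a i) : Monotone (pre N a) := by
  apply monotone_nat_of_le_succ
  intro n
  rw [pre_succ]
  split_ifs with h
  · linarith [ha ⟨n, h⟩]
  · simp

lemma pre_N (N : ℕ) (a : Fin N → ℝ) : pre N a N = ∑ i, a i := by
  rw [pre, Finset.sum_range]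
  exact Finset.sum_congr rfl fun i _ => by rw [dif_pos i.isLt]

open Classical in
/-- index of the block containing `x` -/
noncomputable def idx (N : ℕ) (a : Fin N → ℝ) (x : ℝ) : ℕ :=
  Nat.findGreatest (fun n => pre N a n ≤ x) N

lemma idx_mono (N : ℕ) (a : Fin N → ℝ) : Monotone (idx N a) := by
  intro x y hxy
  classical
  exact Nat.findGreatest_mono (fun n hn => le_trans hn hxy) le_rfl

variable {N : ℕ} {a : Fin N → ℝ} {x : ℝ}

lemma pre_idx_le (hx0 : 0 ≤ x) : pre N a (idx N a x) ≤ x := by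
  classical
  exact Nat.findGreatest_spec (P := fun n => pre N a n ≤ x) (Nat.zero_le N)
    (by show pre N a 0 ≤ x; rw [pre_zero]; exact hx0)

lemma idx_le : idx N a x ≤ N := Nat.findGreatest_le N

lemma idx_lt (hx0 : 0 ≤ x) (hxS : x < ∑ i, a i) : idx N a x < N := by
  have h := pre_idx_le (a := a) hx0
  rcases lt_or_eq_of_le (idx_le (a := a) (x := x)) with h' | h'
  · exact h'
  · rw [h', pre_N] at h; linarith

lemma lt_pre_idx_succ (hx0 : 0 ≤ x) (hxS : x < ∑ i, a i) :
    x < pre N a (idx N a x + 1) := by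
  classical
  have hlt : idx N a x < N := idx_lt hx0 hxS
  by_contra hcon
  push_neg at hcon
  exact Nat.findGreatest_is_greatest (P := fun n => pre N a n ≤ x)
    (Nat.lt_succ_self _) hlt hcon

lemma idx_eq (ha : ∀ i, 0 ≤ a i) (n : ℕ) (hn : n < N)
    (h1 : pre N a n ≤ x) (h2 : x < pre N a (n + 1)) : idx N a x = n := by
  classical
  have hx0 : 0 ≤ x :=
    le_trans (by rw [← pre_zero N a]; exact pre_mono N a ha (Nat.zero_le n)) h1
  have hle : n ≤ idx N a x := Nat.le_findGreatest (le_of_lt hn) h1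
  have hge : idx N a x ≤ n := by
    by_contra hc
    push_neg at hc
    have : pre N a (n + 1) ≤ pre N a (idx N a x) := pre_mono N a ha hc
    linarith [pre_idx_le (a := a) hx0]
  omega


open Classical in
/-- the set of indices hit at offset `y` -/
noncomputable def hotSet (N T : ℕ) (a : Fin N → ℝ) (c y : ℝ) : Finset (Fin N) :=
  Finset.univ.filter (fun i => ∃ t, t < T ∧ idx N a (y + (t : ℝ) * c) = (i : ℕ))

lemma mem_hotSet {T : ℕ} {c y : ℝ} {i : Fin N} :
    i ∈ hotSet N T a c y ↔ ∃ t, t < T ∧ idx N a (y + (t : ℝ) * c) = (i : ℕ) := by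
  classical
  simp [hotSet]

lemma measurableSet_idx_eq (n : ℕ) : MeasurableSet {x : ℝ | idx N a x = n} := by
  have : Set.OrdConnected {x : ℝ | idx N a x = n} := by
    constructor
    intro x hx y hy z hz
    have h1 := idx_mono N a hz.1
    have h2 := idx_mono N a hz.2
    simp only [Set.mem_setOf_eq] at *
    omega
  exact this.measurableSet

lemma measurableSet_memHot (T : ℕ) (c : ℝ) (i : Fin N) :
    MeasurableSet {y : ℝ | i ∈ hotSet N T a c y} := by
  have h : {y : ℝ | i ∈ hotSet N T a c y}
      = ⋃ t ∈ Finset.range T, (fun y => y + (t : ℝ) * c) ⁻¹' {x | idx N a x = (i : ℕ)} := by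
    ext y
    simp [mem_hotSet, Finset.mem_range]
  rw [h]
  exact MeasurableSet.biUnion (Finset.range T).countable_toSet
    (fun t _ => (measurableSet_idx_eq _).preimage (measurable_add_const _))

lemma measurableSet_hotSet_eq (T : ℕ) (c : ℝ) (s : Finset (Fin N)) :
    MeasurableSet {y : ℝ | hotSet N T a c y = s} := by
  have h : {y : ℝ | hotSet N T a c y = s}
      = ⋂ i : Fin N, {y | i ∈ hotSet N T a c y ↔ i ∈ s} := by
    ext y
    simp [Finset.ext_iff]
  rw [h]
  refine MeasurableSet.iInter fun i => ?_
  by_cases hi : i ∈ s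
  · have h2 : {y : ℝ | i ∈ hotSet N T a c y ↔ i ∈ s} = {y | i ∈ hotSet N T a c y} := by
      ext y; simp [hi]
    rw [h2]; exact measurableSet_memHot T c i
  · have h2 : {y : ℝ | i ∈ hotSet N T a c y ↔ i ∈ s} = {y | i ∈ hotSet N T a c y}ᶜ := by
      ext y; simp [hi]
    rw [h2]; exact (measurableSet_memHot T c i).compl

lemma ofReal_max0 (z : ℝ) : ENNReal.ofReal (max 0 z) = ENNReal.ofReal z := by
  rcases le_total z 0 with h | h
  · rw [max_eq_left h, ENNReal.ofReal_zero, ENNReal.ofReal_of_nonpos h]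
  · rw [max_eq_right h]

lemma piece_eq (u v w cc : ℝ) (huv : u ≤ v) (hcc : 0 ≤ cc) :
    ENNReal.ofReal (min cc (v - w) - max 0 (u - w))
      = ENNReal.ofReal (min (max (w + cc) u) v - min (max w u) v) := by
  have h1 : min cc (v - w) - max 0 (u - w) = min (w + cc) v - max w u := by
    simp only [min_def, max_def]; split_ifs <;> linarith
  have h2 : min (max (w + cc) u) v - min (max w u) v = max 0 (min (w + cc) v - max w u) := by
    simp only [min_def, max_def]; split_ifs <;> linarith
  rw [h1, h2, ofReal_max0]

section Main

variable {T : ℕ} {c : ℝ} (ha : ∀ i, 0 ≤ a i) (hT : 0 < T)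
  (hS : (T : ℝ) * c = ∑ i, a i) (hac : ∀ i, a i ≤ c) (hc : 0 ≤ c)

include ha hT hS hac hc

omit ha hT hac in
lemma xmem : ∀ y : ℝ, 0 ≤ y → y < c → ∀ t : ℕ, t < T →
    0 ≤ y + (t : ℝ) * c ∧ y + (t : ℝ) * c < ∑ i, a i := by
  intro y hy0 hyc t ht
  have ht' : (t : ℝ) + 1 ≤ T := by exact_mod_cast ht
  constructor
  · positivity
  · rw [← hS]; nlinarith

lemma card_hotSet {y : ℝ} (hy0 : 0 ≤ y) (hyc : y < c) :
    (hotSet N T a c y).card = T := by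
  have hmem := xmem hS hc y hy0 hyc
  set f : Fin T → Fin N := fun t =>
    ⟨idx N a (y + (t : ℝ) * c), idx_lt (hmem t t.isLt).1 (hmem t t.isLt).2⟩ with hf
  have key : ∀ t t' : Fin T, (t : ℕ) < (t' : ℕ) → f t ≠ f t' := by
    intro t t' hlt heq
    have hmt := hmem t t.isLt
    have hmt' := hmem t' t'.isLt
    have hn : idx N a (y + ((t : ℕ) : ℝ) * c) < N := idx_lt hmt.1 hmt.2
    have heqn : idx N a (y + ((t' : ℕ) : ℝ) * c) = idx N a (y + ((t : ℕ) : ℝ) * c) :=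
      (congrArg Fin.val heq).symm
    have h1 : pre N a (idx N a (y + ((t : ℕ) : ℝ) * c)) ≤ y + ((t : ℕ) : ℝ) * c :=
      pre_idx_le hmt.1
    have h2 : y + ((t' : ℕ) : ℝ) * c <
        pre N a (idx N a (y + ((t : ℕ) : ℝ) * c) + 1) := by
      have := lt_pre_idx_succ hmt'.1 hmt'.2
      rwa [heqn] at this
    have h3 : pre N a (idx N a (y + ((t : ℕ) : ℝ) * c) + 1)
        = pre N a (idx N a (y + ((t : ℕ) : ℝ) * c)) + a ⟨_, hn⟩ :=
      pre_succ_fin N a ⟨_, hn⟩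
    have h4 : a ⟨_, hn⟩ ≤ c := hac _
    have hcast : ((t : ℕ) : ℝ) + 1 ≤ ((t' : ℕ) : ℝ) := by exact_mod_cast hlt
    nlinarith
  have hinj : Function.Injective f := by
    intro t t' heq
    by_contra hne
    rcases Nat.lt_or_ge (t : ℕ) (t' : ℕ) with h | h
    · exact key t t' h heq
    · rcases Nat.lt_or_ge (t' : ℕ) (t : ℕ) with h' | h'
      · exact key t' t h' heq.symm
      · exact hne (Fin.ext (le_antisymm h' h))
  have himg : hotSet N T a c y = Finset.image f Finset.univ := by
    ext i
    rw [mem_hotSet]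
    simp only [Finset.mem_image, Finset.mem_univ, true_and]
    constructor
    · rintro ⟨t, ht, hidx⟩
      exact ⟨⟨t, ht⟩, Fin.ext hidx⟩
    · rintro ⟨t, rfl⟩
      exact ⟨t, t.isLt, rfl⟩
  rw [himg, Finset.card_image_of_injective _ hinj, Finset.card_univ, Fintype.card_fin]


omit hT in
lemma vol_memHot (i : Fin N) :
    MeasureTheory.volume (Set.Ico (0:ℝ) c ∩ {y | i ∈ hotSet N T a c y})
      = ENNReal.ofReal (a i) := by
  set u := pre N a (i : ℕ) with hu
  set v := pre N a ((i : ℕ) + 1) with hv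
  have huv : v = u + a i := pre_succ_fin N a i
  have hu0 : 0 ≤ u := by
    have h := pre_mono N a ha (Nat.zero_le (i : ℕ))
    rwa [pre_zero] at h
  have hvS : v ≤ (T : ℝ) * c := by
    rw [hS, ← pre_N N a]
    exact pre_mono N a ha i.isLt
  have hai := ha i
  have haic := hac i
  have hset : Set.Ico (0:ℝ) c ∩ {y | i ∈ hotSet N T a c y}
      = ⋃ t ∈ Finset.range T,
          (Set.Ico (0:ℝ) c ∩ Set.Ico (u - (t : ℝ) * c) (v - (t : ℝ) * c)) := by
    ext y
    simp only [Set.mem_inter_iff, Set.mem_Ico, Set.mem_setOf_eq, Set.mem_iUnion,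
      Finset.mem_range, exists_prop, mem_hotSet]
    constructor
    · rintro ⟨⟨hy0, hyc⟩, t, ht, hidx⟩
      have hm := xmem hS hc y hy0 hyc t ht
      refine ⟨t, ht, ⟨hy0, hyc⟩, ?_, ?_⟩
      · have h := pre_idx_le (a := a) hm.1
        rw [hidx, ← hu] at h
        linarith
      · have h2 := lt_pre_idx_succ hm.1 hm.2
        rw [hidx, ← hv] at h2
        linarith
    · rintro ⟨t, ht, ⟨hy0, hyc⟩, h1, h2⟩
      have hm := xmem hS hc y hy0 hyc t ht
      exact ⟨⟨hy0, hyc⟩, t, ht,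
        idx_eq ha (i : ℕ) i.isLt (by rw [← hu]; linarith) (by rw [← hv]; linarith)⟩
  rw [hset]
  rw [MeasureTheory.measure_biUnion_finset ?hdisj ?hmeas]
  case hdisj =>
    intro t htm t' htm' hne
    simp only [Finset.coe_range, Set.mem_Iio] at htm htm'
    have hdis : Disjoint (Set.Ico (u - (t : ℝ) * c) (v - (t : ℝ) * c))
        (Set.Ico (u - (t' : ℝ) * c) (v - (t' : ℝ) * c)) := by
      rw [Set.Ico_disjoint_Ico]
      rcases lt_or_gt_of_ne hne with h | h
      · have hcast : (t : ℝ) + 1 ≤ (t' : ℝ) := by exact_mod_cast h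
        have : v - (t' : ℝ) * c ≤ u - (t : ℝ) * c := by nlinarith
        exact le_trans (min_le_right _ _) (le_trans this (le_max_left _ _))
      · have hcast : (t' : ℝ) + 1 ≤ (t : ℝ) := by exact_mod_cast h
        have : v - (t : ℝ) * c ≤ u - (t' : ℝ) * c := by nlinarith
        exact le_trans (min_le_left _ _) (le_trans this (le_max_right _ _))
    exact Disjoint.mono Set.inter_subset_right Set.inter_subset_right hdis
  case hmeas =>
    exact fun t _ => measurableSet_Ico.inter measurableSet_Ico
  set m : ℕ → ℝ := fun t => min (max ((t : ℝ) * c) u) v with hm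
  have hpiece : ∀ t : ℕ,
      MeasureTheory.volume (Set.Ico (0:ℝ) c ∩ Set.Ico (u - (t : ℝ) * c) (v - (t : ℝ) * c))
        = ENNReal.ofReal (m (t + 1) - m t) := by
    intro t
    rw [Set.Ico_inter_Ico, Real.volume_Ico]
    have hcast : ((t + 1 : ℕ) : ℝ) * c = (t : ℝ) * c + c := by push_cast; ring
    rw [hm]
    simp only [hcast]
    exact piece_eq u v ((t : ℝ) * c) c (by linarith) hc
  rw [Finset.sum_congr rfl (fun t _ => hpiece t)]
  have hnonneg : ∀ t ∈ Finset.range T, 0 ≤ m (t + 1) - m t := by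
    intro t _
    have : m t ≤ m (t + 1) := by
      apply min_le_min _ le_rfl
      apply max_le_max _ le_rfl
      push_cast
      nlinarith
    linarith
  rw [← ENNReal.ofReal_sum_of_nonneg hnonneg, Finset.sum_range_sub m]
  have hmT : m T = v := by
    rw [hm]
    exact min_eq_right (le_trans hvS (le_max_left _ _))
  have hm0 : m 0 = u := by
    rw [hm]
    simp only [Nat.cast_zero, zero_mul]
    rw [max_eq_right hu0, min_eq_left (by linarith)]
  rw [hmT, hm0, huv]
  ring_nf

end Main

end THotAux

open THotAux MeasureTheory in
/-- A non-negative vector `a` of length `N` is a non-negative weighted sum of `T`-hot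
vectors iff `T` times the maximum entry of `a` is at most the sum of all entries. -/
theorem stmt0 (N T : ℕ) (hT : 0 < T) (hTN : T ≤ N)
    (a : Fin N → ℝ) (ha : ∀ i, 0 ≤ a i) :
    (∃ lam : Finset (Fin N) → ℝ, (∀ s, 0 ≤ lam s) ∧
        ∀ i, a i = ∑ s ∈ tHotSets N T, lam s * (if i ∈ s then (1 : ℝ) else 0)) ↔
      (T : ℝ) * vecMax (lt_of_lt_of_le hT hTN) a ≤ ∑ i, a i := by
  classical
  constructor
  · rintro ⟨lam, hlam, heq⟩
    obtain ⟨i0, -, hi0⟩ := Finset.exists_mem_eq_sup'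
      (Finset.univ_nonempty_iff.mpr (Fin.pos_iff_nonempty.mp (lt_of_lt_of_le hT hTN))) a
    have hbound : a i0 ≤ ∑ s ∈ tHotSets N T, lam s := by
      rw [heq i0]
      apply Finset.sum_le_sum
      intro s _
      calc lam s * (if i0 ∈ s then (1:ℝ) else 0) ≤ lam s * 1 := by
            apply mul_le_mul_of_nonneg_left _ (hlam s)
            split_ifs <;> norm_num
        _ = lam s := mul_one _
    have hsum : ∑ i, a i = (∑ s ∈ tHotSets N T, lam s) * T := by
      calc ∑ i, a i
          = ∑ i, ∑ s ∈ tHotSets N T, lam s * (if i ∈ s then (1:ℝ) else 0) :=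
            Finset.sum_congr rfl fun i _ => heq i
        _ = ∑ s ∈ tHotSets N T, ∑ i, lam s * (if i ∈ s then (1:ℝ) else 0) :=
            Finset.sum_comm
        _ = ∑ s ∈ tHotSets N T, lam s * T := by
            apply Finset.sum_congr rfl
            intro s hs
            rw [← Finset.mul_sum]
            congr 1
            have hcard : s.card = T := (Finset.mem_filter.mp hs).2
            rw [Finset.sum_ite_mem, Finset.univ_inter, Finset.sum_const, hcard]
            simp
        _ = (∑ s ∈ tHotSets N T, lam s) * T := (Finset.sum_mul _ _ _).symm
    rw [hsum, vecMax, hi0]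
    calc (T : ℝ) * a i0 ≤ (T : ℝ) * ∑ s ∈ tHotSets N T, lam s :=
          mul_le_mul_of_nonneg_left hbound (Nat.cast_nonneg T)
      _ = (∑ s ∈ tHotSets N T, lam s) * T := mul_comm _ _
  · intro hmax
    by_cases hS0 : ∑ i, a i = 0
    · refine ⟨fun _ => 0, fun _ => le_rfl, fun i => ?_⟩
      have hzero : a i = 0 :=
        (Finset.sum_eq_zero_iff_of_nonneg (fun j _ => ha j)).mp hS0 i (Finset.mem_univ i)
      simp [hzero]
    · have hN : 0 < N := lt_of_lt_of_le hT hTN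
      have hSpos : 0 < ∑ i, a i :=
        lt_of_le_of_ne (Finset.sum_nonneg fun j _ => ha j) (Ne.symm hS0)
      have hTpos : (0:ℝ) < T := by exact_mod_cast hT
      set c := (∑ i, a i) / T with hcdef
      have hc : 0 < c := div_pos hSpos hTpos
      have hS : (T : ℝ) * c = ∑ i, a i := by
        rw [hcdef]; field_simp
      have hac : ∀ i, a i ≤ c := by
        intro i
        have h1 : a i ≤ vecMax hN a := Finset.le_sup' a (Finset.mem_univ i)
        have h2 : vecMax hN a ≤ c := by
          rw [hcdef, le_div_iff₀ hTpos]
          linarith [hmax]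
        linarith
      set E : Finset (Fin N) → Set ℝ := fun s => {y | hotSet N T a c y = s} with hE
      refine ⟨fun s => (volume (Set.Ico (0:ℝ) c ∩ E s)).toReal,
        fun s => ENNReal.toReal_nonneg, fun i => ?_⟩
      set H := (tHotSets N T).filter (fun s => i ∈ s) with hH
      have step1 : ∑ s ∈ tHotSets N T,
            (volume (Set.Ico (0:ℝ) c ∩ E s)).toReal * (if i ∈ s then (1:ℝ) else 0)
          = ∑ s ∈ H, (volume (Set.Ico (0:ℝ) c ∩ E s)).toReal := by
        rw [hH, Finset.sum_filter]
        apply Finset.sum_congr rfl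
        intro s _
        split_ifs <;> simp
      have hfin : ∀ s ∈ H, volume (Set.Ico (0:ℝ) c ∩ E s) ≠ ⊤ := by
        intro s _
        refine ne_top_of_le_ne_top ?_ (measure_mono Set.inter_subset_left)
        rw [Real.volume_Ico]
        exact ENNReal.ofReal_ne_top
      have hdisj : (↑H : Set (Finset (Fin N))).PairwiseDisjoint
          (fun s => Set.Ico (0:ℝ) c ∩ E s) := by
        intro s _ s' _ hne
        apply Set.disjoint_left.mpr
        rintro y ⟨-, hy⟩ ⟨-, hy'⟩
        exact hne (hy.symm.trans hy')
      have hmeas : ∀ s ∈ H, MeasurableSet (Set.Ico (0:ℝ) c ∩ E s) :=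
        fun s _ => measurableSet_Ico.inter (measurableSet_hotSet_eq T c s)
      have hunion : ⋃ s ∈ H, (Set.Ico (0:ℝ) c ∩ E s)
          = Set.Ico (0:ℝ) c ∩ {y | i ∈ hotSet N T a c y} := by
        ext y
        simp only [Set.mem_iUnion, Set.mem_inter_iff, Set.mem_setOf_eq, exists_prop,
          hE, hH, Finset.mem_filter, tHotSets, Finset.mem_univ, true_and, Set.mem_Ico]
        constructor
        · rintro ⟨s, ⟨hcard, his⟩, ⟨hy0, hyc⟩, hys⟩
          exact ⟨⟨hy0, hyc⟩, hys ▸ his⟩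
        · rintro ⟨⟨hy0, hyc⟩, hiy⟩
          exact ⟨hotSet N T a c y,
            ⟨card_hotSet ha hT hS hac hc.le hy0 hyc, hiy⟩, ⟨hy0, hyc⟩, rfl⟩
      have key : ∑ s ∈ H, volume (Set.Ico (0:ℝ) c ∩ E s) = ENNReal.ofReal (a i) := by
        rw [← measure_biUnion_finset hdisj hmeas, hunion]
        exact vol_memHot ha hS hac hc.le i
      rw [step1, ← ENNReal.toReal_sum hfin, key, ENNReal.toReal_ofReal (ha i)]
end

section
/- Let P_X be a non-decreasing probability distribution of length N with N ≥ T. Define a(i) = min(α/T, P_X(i)) and suppose a is not T-hot representable. Then for k = T−1, the value y = Σ_{i=1}^{N−T+1} a(i) satisfies y ≥ a(N−T+1); hence the leveling procedure (searching for the smallest k ∈ {K̃,…,T−1} with (1/(T−k))Σ_{i=1}^{N−k} a(i) ≥ a(N−k)) always terminates. -/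
/-- If `a = min(α/T, P_X)` is not `T`-hot representable then for `k = T−1` the leveling
value `y = Σ_{i=1}^{N−T+1} a(i)` satisfies `y ≥ a(N−T+1)`; hence the leveling procedure
always terminates at some `k ∈ {K̃,…,T−1}`. -/
theorem stmt8 (N T : ℕ) (hT : 1 ≤ T) (hTN : T ≤ N)
    (α : ℝ) (hα0 : 0 ≤ α) (hα1 : α < 1)
    (PX : Fin N → ℝ) (hmono : Monotone PX) (hPX0 : ∀ i, 0 ≤ PX i) (hPX1 : ∑ i, PX i = 1)
    (a : Fin N → ℝ) (ha : ∀ i, a i = min (α / T) (PX i))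
    (Ktil : ℕ) (hKtil : Ktil = (Finset.univ.filter (fun i : Fin N => α / T ≤ PX i)).card)
    (hnotrep : ∑ i, a i < (T : ℝ) * vecMax (lt_of_lt_of_le hT hTN) a) :
    a ⟨N - T, by omega⟩ ≤
        ∑ i ∈ Finset.univ.filter (fun i : Fin N => (i : ℕ) < N - T + 1), a i ∧
      ∃ k : ℕ, Ktil ≤ k ∧ k ≤ T - 1 ∧
        a ⟨N - k - 1, by omega⟩ ≤
          (1 / ((T : ℝ) - k)) *
            ∑ i ∈ Finset.univ.filter (fun i : Fin N => (i : ℕ) < N - k), a i := by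
  have hT0 : (0:ℝ) < T := by exact_mod_cast hT
  have hα0' : 0 ≤ α / T := div_nonneg hα0 hT0.le
  have ha0 : ∀ i, 0 ≤ a i := fun i => by
    rw [ha i]; exact le_min hα0' (hPX0 i)
  have haub : ∀ i, a i ≤ α / T := fun i => by rw [ha i]; exact min_le_left _ _
  -- First part
  have hmem : (⟨N - T, by omega⟩ : Fin N) ∈
      Finset.univ.filter (fun i : Fin N => (i : ℕ) < N - T + 1) := by
    simp
  have h1 : a ⟨N - T, by omega⟩ ≤
      ∑ i ∈ Finset.univ.filter (fun i : Fin N => (i : ℕ) < N - T + 1), a i :=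
    Finset.single_le_sum (fun i _ => ha0 i) hmem
  refine ⟨h1, T - 1, ?_, le_refl _, ?_⟩
  · -- Ktil ≤ T - 1
    by_contra hc
    push_neg at hc
    have hKT : T ≤ Ktil := by omega
    have hmax : vecMax (lt_of_lt_of_le hT hTN) a ≤ α / T := by
      apply Finset.sup'_le
      intro i _
      exact haub i
    have hfilt : ∑ i ∈ Finset.univ.filter (fun i : Fin N => α / T ≤ PX i), a i
        = Ktil * (α / T) := by
      rw [hKtil]
      calc ∑ i ∈ Finset.univ.filter (fun i : Fin N => α / T ≤ PX i), a i
          = ∑ _i ∈ Finset.univ.filter (fun i : Fin N => α / T ≤ PX i), α / T :=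
            Finset.sum_congr rfl (fun i hi => by
              rw [ha i, min_eq_left (Finset.mem_filter.mp hi).2])
        _ = _ := by rw [Finset.sum_const, nsmul_eq_mul]
    have hsum : α ≤ ∑ i, a i := by
      have h2 : ∑ i ∈ Finset.univ.filter (fun i : Fin N => α / T ≤ PX i), a i ≤ ∑ i, a i :=
        Finset.sum_le_sum_of_subset_of_nonneg (Finset.filter_subset _ _)
          (fun i _ _ => ha0 i)
      have h3 : α ≤ (Ktil : ℝ) * (α / T) := by
        have : (T : ℝ) * (α / T) ≤ (Ktil : ℝ) * (α / T) := by
          apply mul_le_mul_of_nonneg_right _ hα0'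
          exact_mod_cast hKT
        rwa [mul_div_cancel₀ _ hT0.ne'] at this
      linarith [hfilt ▸ h2]
    have : (T : ℝ) * vecMax (lt_of_lt_of_le hT hTN) a ≤ α := by
      calc (T : ℝ) * vecMax (lt_of_lt_of_le hT hTN) a ≤ (T:ℝ) * (α / T) :=
            mul_le_mul_of_nonneg_left hmax hT0.le
        _ = α := mul_div_cancel₀ _ hT0.ne'
    linarith
  · -- the inequality for k = T - 1
    have hcast : ((T - 1 : ℕ) : ℝ) = (T : ℝ) - 1 := by
      have : (1:ℕ) ≤ T := hT
      push_cast [this]; ring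
    have hidx : N - (T - 1) - 1 = N - T := by omega
    have hidx2 : N - (T - 1) = N - T + 1 := by omega
    rw [hcast]
    rw [show (T:ℝ) - ((T:ℝ) - 1) = 1 by ring, div_one, one_mul]
    simp only [hidx, hidx2]
    exact h1
end

section
/- Let P_X be a non-decreasing probability distribution of length N, a(x) = min(α/T, P_X(x)), r(x) = max(P_X(x) − α/T, 0), and R = Σ_x r(x). Suppose a is not T-hot representable, and set n = ⌈R / a(N)⌉. Then the extended vector P'_X = (a(1),…,a(N), R/n, …, R/n) of length N+n sums to 1, has maximum entry a(N), and satisfies T · max_i P'_X(i) ≤ Σ_i P'_X(i); i.e., P'_X is T-hot representable. -/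
/-- The extended vector `P'_X = (a, R/n, …, R/n)` with `n = ⌈R/a(N)⌉` pseudo-tokens
sums to `1`, has maximum entry `a(N)`, and is `T`-hot representable. -/
theorem stmt10 (N T : ℕ) (hT : 1 ≤ T) (hTN : T ≤ N)
    (α : ℝ) (hα0 : 0 < α) (hα1 : α < 1)
    (PX : Fin N → ℝ) (hmono : Monotone PX) (hPX0 : ∀ i, 0 ≤ PX i) (hPX1 : ∑ i, PX i = 1)
    (a : Fin N → ℝ) (ha : ∀ i, a i = min (α / T) (PX i))
    (r : Fin N → ℝ) (hr : ∀ i, r i = max (PX i - α / T) 0)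
    (R : ℝ) (hR : R = ∑ i, r i)
    (haN : 0 < a ⟨N - 1, by omega⟩)
    (hnotrep : ∑ i, a i < (T : ℝ) * vecMax (lt_of_lt_of_le hT hTN) a)
    (n : ℕ) (hn : n = ⌈R / a ⟨N - 1, by omega⟩⌉₊)
    (P' : Fin (N + n) → ℝ)
    (hP' : ∀ i : Fin (N + n), P' i = if h : (i : ℕ) < N then a ⟨(i : ℕ), h⟩ else R / n) :
    ∑ i, P' i = 1 ∧
      vecMax (by omega) P' = a ⟨N - 1, by omega⟩ ∧
      (T : ℝ) * vecMax (by omega) P' ≤ ∑ i, P' i := by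
  have hN : 0 < N := lt_of_lt_of_le hT hTN
  have hT0 : (0:ℝ) < T := by exact_mod_cast hT
  set L : Fin N := ⟨N - 1, by omega⟩ with hL
  have hamono : Monotone a := by
    intro i j hij
    rw [ha, ha]
    exact min_le_min le_rfl (hmono hij)
  have haL : ∀ i, a i ≤ a L := by
    intro i
    apply hamono
    simp only [hL, Fin.le_def]
    omega
  have har : ∀ i, a i = PX i - r i := by
    intro i
    rw [ha, hr]
    rcases le_total (PX i) (α / T) with h | h
    · rw [min_eq_right h, max_eq_right (by linarith)]; ring
    · rw [min_eq_left h, max_eq_left (by linarith)]; ring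
  have hsuma : ∑ i, a i = 1 - R := by
    rw [hR, ← hPX1, ← Finset.sum_sub_distrib]
    exact Finset.sum_congr rfl fun i _ => har i
  have hR0 : 0 ≤ R := by
    rw [hR]
    exact Finset.sum_nonneg fun i _ => by rw [hr]; exact le_max_right _ _
  have hRn : (n : ℝ) * (R / n) = R := by
    rcases Nat.eq_zero_or_pos n with h0 | hpos
    · have hRz : R = 0 := by
        have := Nat.ceil_eq_zero.mp (h0 ▸ hn.symm)
        by_contra h
        have hRpos : 0 < R := lt_of_le_of_ne hR0 (Ne.symm h)
        have := div_pos hRpos haN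
        linarith
      simp [h0, hRz]
    · have : (n:ℝ) ≠ 0 := by positivity
      field_simp
  have hRna : R / n ≤ a L := by
    rcases Nat.eq_zero_or_pos n with h0 | hpos
    · simp [h0]; exact le_of_lt haN
    · have hle : R / a L ≤ (n : ℝ) := by
        rw [hn]; exact Nat.le_ceil _
      have hRle : R ≤ (n : ℝ) * a L := by
        rw [div_le_iff₀ haN] at hle; linarith
      rw [div_le_iff₀ (by exact_mod_cast hpos : (0:ℝ) < n)]
      linarith
  have hsum : ∑ i, P' i = 1 := by
    rw [Fin.sum_univ_add (f := P')]
    have h1 : ∑ i : Fin N, P' (Fin.castAdd n i) = ∑ i, a i := by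
      apply Finset.sum_congr rfl
      intro i _
      rw [hP', dif_pos (show ((Fin.castAdd n i : Fin (N+n)) : ℕ) < N from i.isLt)]
      exact congrArg a (Fin.ext rfl)
    have h2 : ∑ i : Fin n, P' (Fin.natAdd N i) = (n : ℝ) * (R / n) := by
      rw [Finset.sum_congr rfl (fun i _ => by
        rw [hP', dif_neg (show ¬ ((Fin.natAdd N i : Fin (N+n)) : ℕ) < N by simp)])]
      simp [Finset.sum_const, mul_comm]
    rw [h1, h2, hsuma, hRn]; ring
  have hmax : vecMax (by omega : 0 < N + n) P' = a L := by
    unfold vecMax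
    apply le_antisymm
    · apply Finset.sup'_le
      intro i _
      rw [hP']
      split_ifs with h
      · exact haL _
      · exact hRna
    · have hPL : P' ⟨N - 1, by omega⟩ = a L := by
        rw [hP', dif_pos (show N - 1 < N by omega)]
      calc a L = P' ⟨N - 1, by omega⟩ := hPL.symm
        _ ≤ _ := Finset.le_sup' P' (Finset.mem_univ _)
  refine ⟨hsum, hmax, ?_⟩
  rw [hmax, hsum]
  have : a L ≤ α / T := by rw [ha]; exact min_le_left _ _
  calc (T:ℝ) * a L ≤ (T:ℝ) * (α / T) := by nlinarith
    _ = α := by field_simp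
    _ ≤ 1 := le_of_lt hα1
end

section
/- In Algorithm computing the T-hot decomposition, let ν be a non-negative vector of length N satisfying T·max_i ν(i) ≤ Σ_i ν(i), let A be the set of indices of the T largest entries of ν, ω = 1_A the indicator vector of A, and λ = (1/T)·min( min_{j∈A} T·ν(j), min_{j∉A} (Σ_i ν(i) − T·ν(j)) ). Then λ ≥ 0, the updated vector ν⁺ = ν − λ·ω is non-negative, and ν⁺ again satisfies T·max_i ν⁺(i) ≤ Σ_i ν⁺(i). -/
/-- One iteration of the `T`-hot decomposition algorithm: the coefficient `λ` is
non-negative, the updated vector `ν⁺ = ν − λ·1_A` is non-negative, and `ν⁺` again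
satisfies `T · max_i ν⁺(i) ≤ Σ_i ν⁺(i)`. -/
theorem stmt11 (N T : ℕ) (hT : 1 ≤ T) (hTN : T < N)
    (ν : Fin N → ℝ) (hν0 : ∀ i, 0 ≤ ν i)
    (hνrep : (T : ℝ) * vecMax (by omega) ν ≤ ∑ i, ν i)
    (A : Finset (Fin N)) (hA : A.card = T)
    (hAtop : ∀ j ∈ A, ∀ j' ∉ A, ν j' ≤ ν j)
    (lam : ℝ)
    (hlam : lam = (1 / (T : ℝ)) *
      min (A.inf' (Finset.card_pos.mp (by omega)) (fun j => (T : ℝ) * ν j))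
          (Aᶜ.inf' (Finset.card_pos.mp (by rw [Finset.card_compl, hA, Fintype.card_fin]; omega))
            (fun j => (∑ i, ν i) - (T : ℝ) * ν j)))
    (ν' : Fin N → ℝ) (hν' : ∀ i, ν' i = ν i - lam * (if i ∈ A then 1 else 0)) :
    0 ≤ lam ∧ (∀ i, 0 ≤ ν' i) ∧
      (T : ℝ) * vecMax (by omega) ν' ≤ ∑ i, ν' i := by
  have hN : 0 < N := by omega
  have hT0 : (0:ℝ) < T := by exact_mod_cast hT
  have hAne : A.Nonempty := Finset.card_pos.mp (by omega)
  have hAcne : Aᶜ.Nonempty := Finset.card_pos.mp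
    (by rw [Finset.card_compl, hA, Fintype.card_fin]; omega)
  set S := ∑ i, ν i with hS
  set m1 := A.inf' hAne (fun j => (T : ℝ) * ν j) with hm1
  set m2 := Aᶜ.inf' hAcne (fun j => S - (T : ℝ) * ν j) with hm2
  have hlam' : lam = (1 / (T : ℝ)) * min m1 m2 := hlam
  have hTlam : (T : ℝ) * lam = min m1 m2 := by
    rw [hlam']; field_simp
  have hmaxle : ∀ i, ν i ≤ vecMax hN ν := fun i => Finset.le_sup' ν (Finset.mem_univ i)
  have hrep' : ∀ i, (T:ℝ) * ν i ≤ S := by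
    intro i
    refine le_trans ?_ hνrep
    have := hmaxle i
    nlinarith
  have hm1nn : 0 ≤ m1 := Finset.le_inf' _ _ (fun j _ => by
    have := hν0 j; positivity)
  have hm2nn : 0 ≤ m2 := Finset.le_inf' _ _ (fun j _ => by
    have := hrep' j; linarith)
  have hlamnn : 0 ≤ lam := by
    rw [hlam']
    exact mul_nonneg (by positivity) (le_min hm1nn hm2nn)
  have hlamle : ∀ j ∈ A, lam ≤ ν j := by
    intro j hj
    have h1 : min m1 m2 ≤ (T:ℝ) * ν j :=
      le_trans (min_le_left _ _) (Finset.inf'_le _ hj)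
    have := hTlam
    nlinarith
  have hν'nn : ∀ i, 0 ≤ ν' i := by
    intro i
    rw [hν' i]
    by_cases h : i ∈ A
    · simp only [h, if_pos, mul_one]
      have := hlamle i h; linarith
    · simp only [h, if_neg, mul_zero, not_false_iff]
      simpa using hν0 i
  have hsum : ∑ i, ν' i = S - (T:ℝ) * lam := by
    have h1 : ∑ i, ν' i = ∑ i, (ν i - lam * (if i ∈ A then 1 else 0)) :=
      Finset.sum_congr rfl (fun i _ => hν' i)
    have h2 : ∑ i, (if i ∈ A then (1:ℝ) else 0) = (T:ℝ) := by
      simp [hA]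
    rw [h1, Finset.sum_sub_distrib, ← Finset.mul_sum, h2, ← hS]
    ring
  refine ⟨hlamnn, hν'nn, ?_⟩
  obtain ⟨i₀, -, hi₀⟩ := Finset.exists_mem_eq_sup'
    (Finset.univ_nonempty_iff.mpr (Fin.pos_iff_nonempty.mp hN)) ν'
  have hvm : vecMax hN ν' = ν' i₀ := hi₀
  rw [hvm, hsum, hν' i₀]
  by_cases h : i₀ ∈ A
  · simp only [h, if_pos, mul_one]
    have := hrep' i₀
    nlinarith
  · simp only [h, if_neg, mul_zero, not_false_iff, sub_zero]
    have h1 : min m1 m2 ≤ S - (T:ℝ) * ν i₀ :=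
      le_trans (min_le_right _ _) (Finset.inf'_le _ (Finset.mem_compl.mpr h))
    linarith [hTlam ▸ h1]
end

section
/- With notation as in the T-hot decomposition iteration, if λ = (1/T)·min_{j∈A} T·ν(j) (i.e., the first term in the min attains the minimum), then there is an index i⋆ ∈ A with ν⁺(i⋆) = 0; if instead λ = (1/T)·min_{j∉A} (Σ_i ν(i) − T·ν(j)), then Σ_i ν⁺(i) = T·max_{j∉A} ν(j), and hence there is j⋆ ∉ A with T·ν⁺(j⋆) = Σ_i ν⁺(i). -/
/-!
Subtracting `λ` on the `T` coordinates of `A` lowers the total mass by exactly `T λ`.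
If the first term attains the minimum, then `λ = ν(i⋆)` for a minimiser `i⋆ ∈ A`, which is
therefore zeroed. Otherwise, since `x ↦ Σν − T x` is antitone, the second term equals
`Σν − T · max_{j∉A} ν(j)`, so the new mass is `T · ν(j⋆)` for a maximiser `j⋆ ∉ A`,
an entry that the step leaves unchanged.
-/

open Finset

theorem Finset.sum_sub_mul_ite_mem {ι R : Type*} [Fintype ι] [DecidableEq ι] [Ring R]
    (f : ι → R) (A : Finset ι) (c : R) :
    ∑ i, (f i - c * if i ∈ A then 1 else 0) = ∑ i, f i - A.card * c := by
  rw [sum_sub_distrib, ← mul_sum, sum_ite_mem, univ_inter, sum_const, nsmul_one, Nat.cast_comm]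

theorem Finset.inf'_sub_mul_eq_sub_mul_sup' {ι R : Type*} [Ring R] [LinearOrder R]
    [IsOrderedRing R] {s : Finset ι} (hs : s.Nonempty) (f : ι → R) (a : R) {c : R}
    (hc : 0 ≤ c) :
    s.inf' hs (fun j => a - c * f j) = a - c * s.sup' hs f := by
  obtain ⟨j, hj, hmax⟩ := s.exists_mem_eq_sup' hs f
  rw [hmax]
  refine le_antisymm (inf'_le _ hj) (le_inf' _ _ fun i hi => ?_)
  exact sub_le_sub_left (mul_le_mul_of_nonneg_left (hmax ▸ le_sup' f hi) hc) a

/-- In one step of the `T`-hot decomposition: if the first term of the min attains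
the minimum then some `i⋆ ∈ A` gets `ν⁺(i⋆) = 0`; if the second term attains it then
`Σ_i ν⁺(i) = T · max_{j∉A} ν(j)` and some `j⋆ ∉ A` has `T·ν⁺(j⋆) = Σ_i ν⁺(i)`. -/
theorem stmt12 (N T : ℕ) (hT : 1 ≤ T)
    (ν : Fin N → ℝ)
    (A : Finset (Fin N)) (hA : A.card = T)
    (hAne : A.Nonempty) (hAcne : Aᶜ.Nonempty)
    (lam : ℝ)
    (ν' : Fin N → ℝ) (hν' : ∀ i, ν' i = ν i - lam * (if i ∈ A then 1 else 0)) :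
    (lam = (1 / (T : ℝ)) * A.inf' hAne (fun j => (T : ℝ) * ν j) →
        ∃ i ∈ A, ν' i = 0) ∧
      (lam = (1 / (T : ℝ)) * Aᶜ.inf' hAcne (fun j => (∑ i, ν i) - (T : ℝ) * ν j) →
        (∑ i, ν' i = (T : ℝ) * Aᶜ.sup' hAcne ν) ∧
          ∃ j ∈ Aᶜ, (T : ℝ) * ν' j = ∑ i, ν' i) := by
  have hT0 : (T : ℝ) ≠ 0 := by positivity
  have hsum : ∑ i, ν' i = ∑ i, ν i - T * lam := by
    simp_rw [hν']
    rw [sum_sub_mul_ite_mem, hA]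
  refine ⟨fun hlamA => ?_, fun hlamAc => ?_⟩
  · obtain ⟨i, hi, hmin⟩ := A.exists_mem_eq_inf' hAne fun j => (T : ℝ) * ν j
    refine ⟨i, hi, ?_⟩
    rw [hν', if_pos hi, hlamA, hmin]
    field_simp
    ring
  · obtain ⟨j, hj, hmax⟩ := Aᶜ.exists_mem_eq_sup' hAcne ν
    rw [inf'_sub_mul_eq_sub_mul_sup' _ _ _ (Nat.cast_nonneg T)] at hlamAc
    have hmass : ∑ i, ν' i = T * Aᶜ.sup' hAcne ν := by
      rw [hsum, hlamAc]
      field_simp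
      ring
    refine ⟨hmass, j, hj, ?_⟩
    rw [hmass, hν', if_neg (mem_compl.mp hj), hmax]
    ring
end

section
/- Let the total row-sum imbalance be U = Σ_{j=1}^{K} Δη_{N−j+1}·(T−j) where Δη_{N−j+1} ≥ 0, and let K̃ ≤ K ≤ T−1 with Δη_{N−j+1} = 0 for j < K̃. Suppose P_X is a non-decreasing probability vector, η_i = a(i) − y for i ∈ [N−K+1:N] where a(i) = min(α/T, P_X(i)), y = (1/(T−K))·Σ_{i=1}^{N−K} P_X(i) (valid when a(i)=P_X(i) on [1:N−K]), and R = Σ_{i=N−K̃+1}^{N} (P_X(i) − α/T). Then R − U = 1 − α ≥ 0; in particular R ≥ U. -/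
lemma card_filter_ge (N m : ℕ) :
    (Finset.univ.filter fun j : Fin N => m ≤ (j : ℕ)).card = N - m := by
  rcases le_or_gt N m with h | h
  · have he : (Finset.univ.filter fun j : Fin N => m ≤ (j : ℕ)) = ∅ := by
      ext j; simp only [Finset.mem_filter, Finset.mem_univ, true_and, Finset.notMem_empty,
        iff_false]
      omega
    rw [he]; simp; omega
  · have : (Finset.univ.filter fun j : Fin N => m ≤ (j : ℕ)) = Finset.Ici (⟨m, h⟩ : Fin N) := by
      ext j
      simp [Fin.le_def]
    rw [this, Fin.card_Ici]

lemma tele (f : ℕ → ℝ) (c : ℝ) (K : ℕ) :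
    ∑ j ∈ Finset.Icc 1 K, (f j - f (j+1)) * (c - j)
      = f 1 * (c - 1) - f (K+1) * (c - (K+1)) - ∑ j ∈ Finset.Icc 1 K, f (j+1) := by
  induction K with
  | zero => simp
  | succ K ih =>
    rw [Finset.sum_Icc_succ_top (by omega), Finset.sum_Icc_succ_top (by omega), ih]
    push_cast
    ring

lemma shift (f : ℕ → ℝ) (K : ℕ) :
    ∑ j ∈ Finset.Icc 1 K, f (j+1) = ∑ j ∈ Finset.Icc 1 K, f j - f 1 + f (K+1) := by
  induction K with
  | zero => simp
  | succ K ih =>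
    rw [Finset.sum_Icc_succ_top (by omega), Finset.sum_Icc_succ_top (by omega), ih]
    ring

lemma split_sum {N : ℕ} (m : ℕ) (g : Fin N → ℝ) :
    ∑ i ∈ Finset.univ.filter (fun i : Fin N => (i : ℕ) < m), g i
      + ∑ i ∈ Finset.univ.filter (fun i : Fin N => m ≤ (i : ℕ)), g i = ∑ i, g i := by
  rw [show (Finset.univ.filter fun i : Fin N => m ≤ (i : ℕ))
      = Finset.univ.filter (fun i : Fin N => ¬ ((i : ℕ) < m)) by
    apply Finset.filter_congr; intro i _; simp]
  exact Finset.sum_filter_add_sum_filter_not _ _ _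

/-- The residual mass `R` exceeds the total row-sum imbalance `U`: in fact
`R − U = 1 − α ≥ 0`. -/
theorem stmt14 (N T K Ktil : ℕ) (hT : 1 ≤ T) (hTN : T ≤ N)
    (hK1 : 1 ≤ K) (hKtilK : Ktil ≤ K) (hK2 : K ≤ T - 1)
    (α : ℝ) (hα0 : 0 ≤ α) (hα1 : α < 1)
    (PX : Fin N → ℝ) (hmono : Monotone PX) (hPX0 : ∀ i, 0 ≤ PX i) (hPX1 : ∑ i, PX i = 1)
    (hKtil : Ktil = (Finset.univ.filter (fun i : Fin N => α / T ≤ PX i)).card)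
    (a : Fin N → ℝ) (ha : ∀ i, a i = min (α / T) (PX i))
    (haPX : ∀ i : Fin N, (i : ℕ) < N - K → a i = PX i)
    (y : ℝ)
    (hy : y = (1 / ((T : ℝ) - K)) *
      ∑ i ∈ Finset.univ.filter (fun i : Fin N => (i : ℕ) < N - K), PX i)
    (η : Fin N → ℝ) (hη : ∀ i : Fin N, N - K ≤ (i : ℕ) → η i = a i - y)
    (D : ℕ → ℝ)
    (hDK : D K = η ⟨N - K, by omega⟩)
    (hDj : ∀ j, ∀ _ : 1 ≤ j, ∀ _ : j < K, D j = η ⟨N - j, by omega⟩ - η ⟨N - j - 1, by omega⟩)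
    (hDnn : ∀ j, 1 ≤ j → j ≤ K → 0 ≤ D j)
    (hDz : ∀ j, 1 ≤ j → j < Ktil → D j = 0)
    (U R : ℝ)
    (hU : U = ∑ j ∈ Finset.Icc 1 K, D j * ((T : ℝ) - j))
    (hR : R = ∑ i ∈ Finset.univ.filter (fun i : Fin N => N - Ktil ≤ (i : ℕ)), (PX i - α / T)) :
    R - U = 1 - α ∧ U ≤ R := by
  have hKT : K < T := by omega
  have hKN : K < N := by omega
  have hN1 : 1 ≤ N := by omega
  have hKtilN : Ktil ≤ N := by omega
  have hTpos : (0:ℝ) < T := by exact_mod_cast hT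
  -- characterization of the filter set
  have hiff : ∀ i : Fin N, α / T ≤ PX i ↔ N - Ktil ≤ (i : ℕ) := by
    intro i
    constructor
    · intro h
      have hsub : (Finset.univ.filter fun j : Fin N => (i : ℕ) ≤ (j : ℕ)) ⊆
          (Finset.univ.filter fun j : Fin N => α / T ≤ PX j) := by
        intro j hj
        simp only [Finset.mem_filter, Finset.mem_univ, true_and] at hj ⊢
        exact le_trans h (hmono (by exact_mod_cast hj))
      have hcard := Finset.card_le_card hsub
      rw [card_filter_ge] at hcard
      rw [← hKtil] at hcard
      have := i.isLt
      omega
    · intro h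
      by_contra hc
      push_neg at hc
      have hsub : (Finset.univ.filter fun j : Fin N => α / T ≤ PX j) ⊆
          (Finset.univ.filter fun j : Fin N => (i : ℕ) + 1 ≤ (j : ℕ)) := by
        intro j hj
        simp only [Finset.mem_filter, Finset.mem_univ, true_and] at hj ⊢
        by_contra hji
        push_neg at hji
        have : PX j ≤ PX i := hmono (by omega)
        linarith
      have hcard := Finset.card_le_card hsub
      rw [card_filter_ge, ← hKtil] at hcard
      have := i.isLt
      omega
  have ha_top : ∀ i : Fin N, N - Ktil ≤ (i : ℕ) → a i = α / T := by
    intro i hi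
    rw [ha]
    exact min_eq_left ((hiff i).mpr hi)
  have ha_bot : ∀ i : Fin N, (i : ℕ) < N - Ktil → a i = PX i := by
    intro i hi
    rw [ha]
    refine min_eq_right (le_of_lt ?_)
    by_contra hc
    push_neg at hc
    have := (hiff i).mp hc
    omega
  -- the auxiliary sequence f
  set f : ℕ → ℝ := fun j => if h : 1 ≤ j ∧ j ≤ K then η ⟨N - j, by omega⟩ else 0 with hfdef
  have hf_eq : ∀ j, ∀ h1 : 1 ≤ j, ∀ h2 : j ≤ K, f j = η ⟨N - j, by omega⟩ := by
    intro j h1 h2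
    simp only [hfdef]
    rw [dif_pos ⟨h1, h2⟩]
  have hfK1 : f (K + 1) = 0 := by
    simp only [hfdef]
    rw [dif_neg (by omega)]
  have hD : ∀ j ∈ Finset.Icc 1 K, D j * ((T:ℝ) - j) = (f j - f (j+1)) * ((T:ℝ) - j) := by
    intro j hj
    simp only [Finset.mem_Icc] at hj
    rcases eq_or_lt_of_le hj.2 with hje | hjl
    · subst hje
      rw [hDK, hf_eq j hj.1 le_rfl, hfK1, sub_zero]
    · rw [hDj j hj.1 hjl, hf_eq j hj.1 (le_of_lt hjl), hf_eq (j+1) (by omega) (by omega)]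
      have e : (⟨N - j - 1, by omega⟩ : Fin N) = ⟨N - (j + 1), by omega⟩ :=
        Fin.ext (Nat.sub_sub N j 1)
      rw [e]
  -- Abel summation: U = T * f 1 - ∑_{j=1}^K f j
  have hU1 : U = (T:ℝ) * f 1 - ∑ j ∈ Finset.Icc 1 K, f j := by
    rw [hU, Finset.sum_congr rfl hD, tele, shift, hfK1]
    ring
  -- reindex: ∑_{j=1}^K f j = ∑_{i ≥ N-K} η i
  have hreindex : ∑ j ∈ Finset.Icc 1 K, f j
      = ∑ i ∈ Finset.univ.filter (fun i : Fin N => N - K ≤ (i : ℕ)), η i := by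
    apply Finset.sum_bij' (fun (j : ℕ) (hj : j ∈ Finset.Icc 1 K) =>
        (⟨N - j, by simp only [Finset.mem_Icc] at hj; omega⟩ : Fin N))
      (fun (i : Fin N) (hi : i ∈ Finset.univ.filter fun i : Fin N => N - K ≤ (i:ℕ)) => N - (i:ℕ))
    · -- hi
      intro j hj
      simp only [Finset.mem_Icc] at hj
      simp only [Finset.mem_filter, Finset.mem_univ, true_and]
      show N - K ≤ N - j
      omega
    · -- left_inv
      intro j hj
      simp only [Finset.mem_Icc] at hj
      show N - (N - j) = j
      omega
    · -- right_inv
      intro i hi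
      simp only [Finset.mem_filter, Finset.mem_univ, true_and] at hi
      have hlt := i.isLt
      exact Fin.ext (show N - (N - (i:ℕ)) = (i:ℕ) by omega)
    · -- h
      intro j hj
      simp only [Finset.mem_Icc] at hj
      exact hf_eq j hj.1 hj.2
    · -- hj
      intro i hi
      simp only [Finset.mem_filter, Finset.mem_univ, true_and] at hi
      have hlt := i.isLt
      simp only [Finset.mem_Icc]
      omega
  -- ∑_{i ≥ N-K} η i = ∑_{i ≥ N-K} a i - K * y
  have hsum_eta : ∑ i ∈ Finset.univ.filter (fun i : Fin N => N - K ≤ (i : ℕ)), η i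
      = ∑ i ∈ Finset.univ.filter (fun i : Fin N => N - K ≤ (i : ℕ)), a i - (K:ℝ) * y := by
    rw [Finset.sum_congr rfl (fun i hi => by
      simp only [Finset.mem_filter, Finset.mem_univ, true_and] at hi
      exact hη i hi)]
    rw [Finset.sum_sub_distrib, Finset.sum_const, card_filter_ge,
      show N - (N - K) = K by omega, nsmul_eq_mul]
  -- y identity
  have hTK : (0:ℝ) < (T:ℝ) - K := by
    have : (K:ℝ) < T := by exact_mod_cast hKT
    linarith
  have hTKne : (T:ℝ) - K ≠ 0 := ne_of_gt hTK
  have hy2 : ((T:ℝ) - K) * y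
      = ∑ i ∈ Finset.univ.filter (fun i : Fin N => (i : ℕ) < N - K), a i := by
    rw [hy]
    rw [Finset.sum_congr rfl (fun i hi => by
      simp only [Finset.mem_filter, Finset.mem_univ, true_and] at hi
      exact (haPX i hi).symm)]
    field_simp
  -- top entry
  have hf1 : f 1 = a ⟨N - 1, by omega⟩ - y := by
    rw [hf_eq 1 le_rfl hK1]
    exact hη ⟨N - 1, by omega⟩ (show N - K ≤ N - 1 by omega)
  -- main identity: U = T * a(N-1) - ∑ a
  have hsplitA := split_sum (N := N) (N - K) a
  have hUval : U = (T:ℝ) * a ⟨N - 1, by omega⟩ - ∑ i, a i := by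
    rw [hU1, hreindex, hsum_eta, hf1]
    linear_combination -hsplitA - hy2
  -- nonnegativity of U
  have hUnn : 0 ≤ U := by
    rw [hU]
    apply Finset.sum_nonneg
    intro j hj
    simp only [Finset.mem_Icc] at hj
    apply mul_nonneg (hDnn j hj.1 hj.2)
    have : (j:ℝ) ≤ (T:ℝ) := by exact_mod_cast (by omega : j ≤ T)
    linarith
  have hTα : (T:ℝ) * (α / T) = α := by field_simp
  -- Ktil ≥ 1
  rcases Nat.eq_zero_or_pos Ktil with hK0 | hKtil1
  · exfalso
    have hall : ∀ i : Fin N, a i = PX i := by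
      intro i
      apply ha_bot
      have := i.isLt
      omega
    have hsa : ∑ i, a i = 1 := by
      rw [Finset.sum_congr rfl (fun i _ => hall i), hPX1]
    have hlt : PX ⟨N - 1, by omega⟩ < α / T := by
      by_contra hc
      push_neg at hc
      have h2 : N - Ktil ≤ N - 1 := (hiff _).mp hc
      omega
    rw [hall, hsa] at hUval
    have hlt2 : (T:ℝ) * PX ⟨N - 1, by omega⟩ < (T:ℝ) * (α / T) :=
      (mul_lt_mul_iff_right₀ hTpos).mpr hlt
    rw [hTα] at hlt2
    linarith
  · -- main case
    have hatop : a ⟨N - 1, by omega⟩ = α / T :=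
      ha_top ⟨N - 1, by omega⟩ (show N - Ktil ≤ N - 1 by omega)
    have hsplitP := split_sum (N := N) (N - Ktil) PX
    have hsumA : ∑ i, a i
        = ∑ i ∈ Finset.univ.filter (fun i : Fin N => (i : ℕ) < N - Ktil), PX i
          + (Ktil:ℝ) * (α / T) := by
      rw [← split_sum (N := N) (N - Ktil) a]
      congr 1
      · exact Finset.sum_congr rfl (fun i hi => ha_bot i (by
          simpa using (Finset.mem_filter.mp hi).2))
      · rw [Finset.sum_congr rfl (fun i hi => ha_top i (by
          simpa using (Finset.mem_filter.mp hi).2)), Finset.sum_const, card_filter_ge,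
          show N - (N - Ktil) = Ktil by omega, nsmul_eq_mul]
    have hRval : R = ∑ i ∈ Finset.univ.filter (fun i : Fin N => N - Ktil ≤ (i : ℕ)), PX i
        - (Ktil:ℝ) * (α / T) := by
      rw [hR, Finset.sum_sub_distrib, Finset.sum_const, card_filter_ge,
        show N - (N - Ktil) = Ktil by omega, nsmul_eq_mul]
    rw [hPX1] at hsplitP
    rw [hatop] at hUval
    have hmain : R - U = 1 - α := by
      rw [hRval, hUval, hsumA, hTα]
      linarith
    exact ⟨hmain, by linarith⟩
end
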